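/- For every natural number n ≥ 3, the function f(s) = (1 − e^{−4ns/(n+1)})/((1 − e^{−4s/(n+1)})·(1 − e^{−(2n−2)s/(n+1)})·(1 − e^{−2ns/(n+1)})²), defined for s > 0, has Hilbert-series Laurent coefficients (a₀, a₁) of order 3 at s = 0 with a₀ = a₁ = (n+1)³/(8n(n−1)). -/

import Mathlib

/-!
With `φ(x) = (1 - e^{-x})/x` (and `φ(0) = 1`), the Hilbert series of a hypersurface of degree `δ`
in weights `w₁, …, w₄` is `s⁻³ · δ/(w₁w₂w₃w₄) · G(s)` with `G(s) = φ(δs)/∏ φ(wᵢs)`. Since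
`φ(x) = 1 - x/2 + O(x²)`, `G` is differentiable at `0` with `G(0) = 1` and
`G'(0) = (∑ wᵢ - δ)/2`, and the two Laurent coefficients are `G(0)` and `G'(0)` up to the factor
`δ/∏ wᵢ`. For the D-type threefold `∑ wᵢ - δ = 2`, which is why `a₀ = a₁`.
-/

/-- `f` has Hilbert-series Laurent coefficients `(a₀, a₁)` of order `n` at `s = 0`:
`sⁿ·f(s) → a₀` and `sⁿ⁻¹·(f(s) − a₀/sⁿ) → a₁` as `s → 0⁺`. -/
def HSLaurentCoeffs (f : ℝ → ℝ) (n : ℕ) (a₀ a₁ : ℝ) : Prop :=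
  Filter.Tendsto (fun s => s ^ n * f s) (nhdsWithin 0 (Set.Ioi 0)) (nhds a₀) ∧
  Filter.Tendsto (fun s => s ^ (n - 1) * (f s - a₀ / s ^ n))
    (nhdsWithin 0 (Set.Ioi 0)) (nhds a₁)

open Real Filter Set Topology Asymptotics

theorem HSLaurentCoeffs.of_hasDerivAt {f G : ℝ → ℝ} {n : ℕ} {a₀ a₁ : ℝ} (hn : n ≠ 0)
    (hfG : ∀ s > 0, s ^ n * f s = G s) (hG : HasDerivAt G a₁ 0) (hG₀ : G 0 = a₀) :
    HSLaurentCoeffs f n a₀ a₁ := by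
  constructor
  · have hlim : Tendsto G (𝓝[>] 0) (𝓝 a₀) :=
      hG₀ ▸ hG.continuousAt.tendsto.mono_left nhdsWithin_le_nhds
    refine hlim.congr' ?_
    filter_upwards [self_mem_nhdsWithin] with s hs
    exact (hfG s hs).symm
  · refine hG.tendsto_slope_zero_right.congr' ?_
    filter_upwards [self_mem_nhdsWithin] with s (hs : 0 < s)
    obtain ⟨m, rfl⟩ := Nat.exists_eq_succ_of_ne_zero hn
    rw [zero_add, hG₀, ← hfG s hs, smul_eq_mul, Nat.succ_sub_one, pow_succ]
    field_simp

noncomputable def oneSubExpNegDiv (x : ℝ) : ℝ := if x = 0 then 1 else (1 - exp (-x)) / x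

lemma oneSubExpNegDiv_zero : oneSubExpNegDiv 0 = 1 := if_pos rfl

lemma oneSubExpNegDiv_of_ne_zero {x : ℝ} (hx : x ≠ 0) :
    oneSubExpNegDiv x = (1 - exp (-x)) / x := if_neg hx

lemma abs_oneSubExpNegDiv_sub_le {x : ℝ} (hx : |x| ≤ 1) :
    |oneSubExpNegDiv x - (1 - x / 2)| ≤ 2 / 9 * x ^ 2 := by
  rcases eq_or_ne x 0 with rfl | hx₀
  · simp [oneSubExpNegDiv_zero]
  -- the cubic Taylor bound `|e^{-x} - (1 - x + x²/2)| ≤ (2/9)|x|³`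
  have htaylor := Real.exp_bound (x := -x) (by rwa [abs_neg]) (n := 3) (by norm_num)
  simp only [Finset.sum_range_succ, Finset.sum_range_zero, abs_neg] at htaylor
  norm_num [Nat.factorial] at htaylor
  have hrem : oneSubExpNegDiv x - (1 - x / 2) = -(exp (-x) - (1 - x + x ^ 2 / 2)) / x := by
    rw [oneSubExpNegDiv_of_ne_zero hx₀]
    field_simp
    ring
  have hx_pos : 0 < |x| := abs_pos.mpr hx₀
  rw [hrem, abs_div, abs_neg, div_le_iff₀ hx_pos]
  calc |exp (-x) - (1 - x + x ^ 2 / 2)| ≤ |x| ^ 3 * (2 / 9) := by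
        convert htaylor using 3; ring
    _ = 2 / 9 * x ^ 2 * |x| := by rw [pow_succ, sq_abs]; ring

lemma hasDerivAt_oneSubExpNegDiv : HasDerivAt oneSubExpNegDiv (-(1 / 2)) 0 := by
  rw [hasDerivAt_iff_isLittleO]
  have hquad : (fun x => oneSubExpNegDiv x - oneSubExpNegDiv 0 - (x - 0) • -(1 / 2 : ℝ))
      =O[𝓝 0] fun x : ℝ => x ^ 2 := by
    refine IsBigO.of_bound (2 / 9) ?_
    filter_upwards [Metric.closedBall_mem_nhds (0 : ℝ) one_pos] with x hx
    rw [Metric.mem_closedBall, Real.dist_eq, sub_zero] at hx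
    convert abs_oneSubExpNegDiv_sub_le hx using 2
    · rw [oneSubExpNegDiv_zero, sub_zero, smul_eq_mul, Real.norm_eq_abs]; ring_nf
    · simp
  simpa using hquad.trans_isLittleO (isLittleO_pow_id one_lt_two)

lemma hasDerivAt_oneSubExpNegDiv_mul (k : ℝ) :
    HasDerivAt (fun s => oneSubExpNegDiv (k * s)) (-(k / 2)) 0 := by
  have h := hasDerivAt_oneSubExpNegDiv.comp_of_eq 0 ((hasDerivAt_id (0 : ℝ)).const_mul k)
    (by simp)
  exact h.congr_deriv (by ring)

lemma hasDerivAt_oneSubExpNegDiv_ratio (δ w₁ w₂ w₃ w₄ : ℝ) :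
    HasDerivAt (fun s => oneSubExpNegDiv (δ * s) / (oneSubExpNegDiv (w₁ * s) *
        oneSubExpNegDiv (w₂ * s) * oneSubExpNegDiv (w₃ * s) * oneSubExpNegDiv (w₄ * s)))
      ((w₁ + w₂ + w₃ + w₄ - δ) / 2) 0 := by
  have h := (hasDerivAt_oneSubExpNegDiv_mul δ).div
    ((((hasDerivAt_oneSubExpNegDiv_mul w₁).mul (hasDerivAt_oneSubExpNegDiv_mul w₂)).mul
      (hasDerivAt_oneSubExpNegDiv_mul w₃)).mul (hasDerivAt_oneSubExpNegDiv_mul w₄))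
    (by simp [oneSubExpNegDiv_zero])
  refine h.congr_deriv ?_
  simp only [Pi.mul_apply, mul_zero, oneSubExpNegDiv_zero]
  ring

lemma one_sub_exp_neg_eq_mul_oneSubExpNegDiv (x : ℝ) :
    1 - exp (-x) = x * oneSubExpNegDiv x := by
  rcases eq_or_ne x 0 with rfl | hx
  · simp
  · rw [oneSubExpNegDiv_of_ne_zero hx, mul_div_cancel₀ _ hx]

theorem hsLaurentCoeffs_weighted_hypersurface {δ w₁ w₂ w₃ w₄ : ℝ} (hδ : δ ≠ 0) (h₁ : w₁ ≠ 0)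
    (h₂ : w₂ ≠ 0) (h₃ : w₃ ≠ 0) (h₄ : w₄ ≠ 0) :
    HSLaurentCoeffs
      (fun s => (1 - exp (-(δ * s))) / ((1 - exp (-(w₁ * s))) * (1 - exp (-(w₂ * s)))
        * (1 - exp (-(w₃ * s))) * (1 - exp (-(w₄ * s)))))
      3 (δ / (w₁ * w₂ * w₃ * w₄)) (δ / (w₁ * w₂ * w₃ * w₄) * ((w₁ + w₂ + w₃ + w₄ - δ) / 2)) := by
  refine HSLaurentCoeffs.of_hasDerivAt three_ne_zero (fun s hs => ?_)
    ((hasDerivAt_oneSubExpNegDiv_ratio δ w₁ w₂ w₃ w₄).const_mul _)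
    (by simp [oneSubExpNegDiv_zero])
  have hφ : ∀ w ≠ 0, oneSubExpNegDiv (w * s) ≠ 0 := fun w hw h => by
    have := one_sub_exp_neg_eq_mul_oneSubExpNegDiv (w * s)
    rw [h, mul_zero, sub_eq_zero, eq_comm, exp_eq_one_iff, neg_eq_zero] at this
    exact mul_ne_zero hw hs.ne' this
  simp only [one_sub_exp_neg_eq_mul_oneSubExpNegDiv]
  have := hφ w₁ h₁; have := hφ w₂ h₂; have := hφ w₃ h₃; have := hφ w₄ h₄
  field_simp

/-- The Hilbert series of the D-type threefold `w² + x² + y²z + zⁿ = 0` (`n ≥ 3`) has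
Laurent coefficients `a₀ = a₁ = (n+1)³/(8n(n−1))` of order 3. -/
theorem D_type_threefold_hs_coeffs (n : ℕ) (hn : 3 ≤ n) :
    HSLaurentCoeffs
      (fun s => (1 - Real.exp (-(4 * (n : ℝ) * s / ((n : ℝ) + 1))))
        / ((1 - Real.exp (-(4 * s / ((n : ℝ) + 1))))
           * (1 - Real.exp (-((2 * (n : ℝ) - 2) * s / ((n : ℝ) + 1))))
           * (1 - Real.exp (-(2 * (n : ℝ) * s / ((n : ℝ) + 1)))) ^ 2))
      3 (((n : ℝ) + 1) ^ 3 / (8 * (n : ℝ) * ((n : ℝ) - 1)))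
        (((n : ℝ) + 1) ^ 3 / (8 * (n : ℝ) * ((n : ℝ) - 1))) := by
  have hN : (3 : ℝ) ≤ n := by exact_mod_cast hn
  have h := hsLaurentCoeffs_weighted_hypersurface (δ := 4 * n / (n + 1)) (w₁ := 4 / (n + 1))
    (w₂ := (2 * n - 2) / (n + 1)) (w₃ := 2 * n / (n + 1)) (w₄ := 2 * n / (n + 1))
    (by positivity) (by positivity) (div_ne_zero (by linarith) (by positivity))
    (by positivity) (by positivity)
  have ha₀ : 4 * n / (n + 1) / (4 / (n + 1) * ((2 * n - 2) / (n + 1)) * (2 * n / (n + 1))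
      * (2 * n / (n + 1))) = ((n : ℝ) + 1) ^ 3 / (8 * n * (n - 1)) := by
    field_simp
    ring
  have hshift : (4 / (n + 1) + (2 * n - 2) / (n + 1) + 2 * n / (n + 1) + 2 * n / (n + 1)
      - 4 * n / (n + 1)) / 2 = (1 : ℝ) := by
    field_simp
    ring
  rw [ha₀, hshift, mul_one] at h
  convert h using 3 with s
  · ring_nf
  · rw [sq, ← mul_assoc]
    ring_nf
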